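/- Let A be an n×n symmetric positive definite matrix with unit diagonal having at most q nonzero elements in any row. Then κ(A) ≤ q · min_D κ(D A D) over positive diagonal matrices D. -/

import Mathlib

/-- The 2-norm condition number `κ(M) = ‖M‖₂ ‖M⁻¹‖₂`, via the operator norm on
Euclidean space. -/
noncomputable def kappa {n : ℕ} (M : Matrix (Fin n) (Fin n) ℝ) : ℝ :=
  ‖Matrix.toEuclideanCLM (𝕜 := ℝ) M‖ * ‖Matrix.toEuclideanCLM (𝕜 := ℝ) M⁻¹‖

/-!
A positive semidefinite matrix with unit diagonal has entries `|aᵢⱼ| ≤ 1`, so every absolute row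
sum of `A` is at most `q`, and for a symmetric matrix the Schur test bounds `‖A‖₂` by the largest
absolute row sum: `‖A‖₂ ≤ q`. With `B = DAD` we have `A⁻¹ = D B⁻¹ D`, hence
`‖A⁻¹‖₂ ≤ ‖D‖₂² ‖B⁻¹‖₂`, and `‖D‖₂² = maxᵢ dᵢ² = maxᵢ bᵢᵢ ≤ ‖B‖₂`.
-/

open Matrix Finset
open scoped Matrix.Norms.L2Operator

namespace Matrix

variable {𝕜 : Type*} [RCLike 𝕜] {m n : Type*} [Fintype m] [Fintype n]

/-- **Schur test**. -/
theorem l2_opNorm_le_sqrt_mul_of_sum_norm_le [DecidableEq n] (M : Matrix m n 𝕜) {r c : ℝ}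
    (hr₀ : 0 ≤ r) (hr : ∀ i, ∑ j, ‖M i j‖ ≤ r) (hc : ∀ j, ∑ i, ‖M i j‖ ≤ c) :
    ‖M‖ ≤ √(r * c) := by
  rw [l2_opNorm_def]
  refine ContinuousLinearMap.opNorm_le_bound _ (Real.sqrt_nonneg _) fun x => ?_
  change ‖(EuclideanSpace.equiv m 𝕜).symm (M *ᵥ x)‖ ≤ _
  rw [← Real.sqrt_sq (norm_nonneg x), ← Real.sqrt_mul' _ (sq_nonneg _)]
  refine Real.le_sqrt_of_sq_le ?_
  have hrow : ∀ i, ‖(M *ᵥ x) i‖ ^ 2 ≤ r * ∑ j, ‖M i j‖ * ‖x j‖ ^ 2 := fun i => by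
    calc ‖(M *ᵥ x) i‖ ^ 2 ≤ (∑ j, ‖M i j‖ * ‖x j‖) ^ 2 := by
          gcongr
          exact (norm_sum_le _ _).trans_eq (by simp_rw [norm_mul])
      _ ≤ (∑ j, ‖M i j‖) * ∑ j, ‖M i j‖ * ‖x j‖ ^ 2 :=
          sum_sq_le_sum_mul_sum_of_sq_le_mul _ (fun _ _ => norm_nonneg _)
            (fun _ _ => by positivity) (fun _ _ => by rw [mul_pow, sq (‖M _ _‖), mul_assoc])
      _ ≤ r * ∑ j, ‖M i j‖ * ‖x j‖ ^ 2 := by gcongr; exact hr i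
  calc ‖(EuclideanSpace.equiv m 𝕜).symm (M *ᵥ x)‖ ^ 2 = ∑ i, ‖(M *ᵥ x) i‖ ^ 2 :=
        EuclideanSpace.norm_sq_eq _
    _ ≤ ∑ i, r * ∑ j, ‖M i j‖ * ‖x j‖ ^ 2 := sum_le_sum fun i _ => hrow i
    _ = r * ∑ j, (∑ i, ‖M i j‖) * ‖x j‖ ^ 2 := by
        rw [← mul_sum, sum_comm]; simp_rw [sum_mul]
    _ ≤ r * ∑ j, c * ‖x j‖ ^ 2 := by gcongr with j; exact hc j
    _ = r * c * ‖x‖ ^ 2 := by rw [← mul_sum, EuclideanSpace.norm_sq_eq, mul_assoc]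

theorem IsHermitian.l2_opNorm_le_of_sum_norm_le [DecidableEq n] {M : Matrix n n 𝕜}
    (hM : M.IsHermitian) {r : ℝ} (hr₀ : 0 ≤ r) (hr : ∀ i, ∑ j, ‖M i j‖ ≤ r) : ‖M‖ ≤ r := by
  have hc : ∀ j, ∑ i, ‖M i j‖ ≤ r := fun j => by
    simpa only [← hM.apply j, norm_star] using hr j
  simpa [Real.sqrt_mul_self hr₀] using M.l2_opNorm_le_sqrt_mul_of_sum_norm_le hr₀ hr hc

theorem norm_apply_le_l2_opNorm [DecidableEq n] (M : Matrix m n 𝕜) (i : m) (j : n) :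
    ‖M i j‖ ≤ ‖M‖ := by
  calc ‖M i j‖ = ‖(M *ᵥ Pi.single j 1) i‖ := by rw [mulVec_single_one, col_apply]
    _ ≤ ‖(EuclideanSpace.equiv m 𝕜).symm (M *ᵥ Pi.single j 1)‖ :=
        PiLp.norm_apply_le (WithLp.toLp 2 (M *ᵥ Pi.single j 1)) i
    _ ≤ ‖M‖ := by simpa using M.l2_opNorm_mulVec (EuclideanSpace.single j 1)

theorem PosSemidef.two_mul_abs_apply_le {A : Matrix n n ℝ} (hA : A.PosSemidef) (i j : n) :
    2 * |A i j| ≤ A i i + A j j := by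
  classical
  have hform : ∀ s : ℝ, 0 ≤ A i i + s * A j i + s * (A i j + s * A j j) := fun s => by
    have := hA.dotProduct_mulVec_nonneg (Pi.single i 1 + Pi.single j s)
    simpa [mulVec_add, mulVec_single, dotProduct_add, add_dotProduct] using this
  have hsymm : A j i = A i j := hA.isHermitian.apply i j
  have h₁ := hform 1
  have h₂ := hform (-1)
  rw [hsymm] at h₁ h₂
  cases abs_cases (A i j) <;> linarith

theorem PosSemidef.l2_opNorm_le_of_card_ne_zero_le [DecidableEq n] {A : Matrix n n ℝ}
    (hA : A.PosSemidef) (hdiag : ∀ i, A i i = 1) {q : ℕ}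
    (hq : ∀ i, #{j | A i j ≠ 0} ≤ q) : ‖A‖ ≤ q := by
  refine hA.isHermitian.l2_opNorm_le_of_sum_norm_le q.cast_nonneg fun i => ?_
  have hentry : ∀ j, ‖A i j‖ ≤ 1 := fun j => by
    have := hA.two_mul_abs_apply_le i j
    rw [hdiag, hdiag] at this
    rw [Real.norm_eq_abs]
    linarith
  calc ∑ j, ‖A i j‖ = ∑ j with A i j ≠ 0, ‖A i j‖ := by
        simp_rw [← norm_ne_zero_iff (a := A i _)]
        exact (sum_filter_ne_zero _).symm
    _ ≤ ∑ j with A i j ≠ 0, 1 := sum_le_sum fun j _ => hentry j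
    _ ≤ q := by simpa using hq i

theorem l2_opNorm_diagonal_sq_le_of_diag_eq_one [DecidableEq n] {A : Matrix n n 𝕜}
    (hdiag : ∀ i, A i i = 1) (d : n → 𝕜) :
    ‖diagonal d‖ ^ 2 ≤ ‖diagonal d * A * diagonal d‖ := by
  rw [l2_opNorm_diagonal, ← Real.le_sqrt (norm_nonneg _) (norm_nonneg _),
    pi_norm_le_iff_of_nonneg (Real.sqrt_nonneg _)]
  intro i
  rw [Real.le_sqrt (norm_nonneg _) (norm_nonneg _)]
  calc ‖d i‖ ^ 2 = ‖(diagonal d * A * diagonal d) i i‖ := by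
        rw [mul_diagonal, diagonal_mul, hdiag, mul_one, norm_mul, sq]
    _ ≤ ‖diagonal d * A * diagonal d‖ := norm_apply_le_l2_opNorm _ i i

theorem l2_opNorm_inv_le_diagonal_sq_mul [DecidableEq n] (A : Matrix n n 𝕜) {d : n → 𝕜}
    (hd : ∀ i, d i ≠ 0) :
    ‖A⁻¹‖ ≤ ‖diagonal d‖ ^ 2 * ‖(diagonal d * A * diagonal d)⁻¹‖ := by
  have hD : IsUnit (diagonal d).det := by
    rw [det_diagonal]
    exact (prod_ne_zero_iff.mpr fun i _ => hd i).isUnit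
  have hinv : A⁻¹ = diagonal d * (diagonal d * A * diagonal d)⁻¹ * diagonal d := by
    rw [mul_inv_rev, mul_inv_rev, mul_nonsing_inv_cancel_left _ _ hD,
      nonsing_inv_mul_cancel_right _ _ hD]
  calc ‖A⁻¹‖ ≤ ‖diagonal d‖ * ‖(diagonal d * A * diagonal d)⁻¹‖ * ‖diagonal d‖ := by
        rw [hinv]; exact norm_mul₃_le
    _ = ‖diagonal d‖ ^ 2 * ‖(diagonal d * A * diagonal d)⁻¹‖ := by ring

end Matrix

/-- Van der Sluis, Theorem 4.3: if `A` is symmetric positive definite with unit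
diagonal and at most `q` nonzero entries in any row, then
`κ(A) ≤ q ⋅ min_D κ(D A D)` over positive diagonal `D`. -/
theorem stmt_14 (n : ℕ) (A : Matrix (Fin n) (Fin n) ℝ)
    (hA : A.PosDef) (hdiag : ∀ i, A i i = 1)
    (q : ℕ) (hq : ∀ i, (Finset.univ.filter fun j => A i j ≠ 0).card ≤ q) :
    ∀ d : Fin n → ℝ, (∀ i, 0 < d i) →
      kappa A ≤ q * kappa (Matrix.diagonal d * A * Matrix.diagonal d) := by
  intro d hd
  set B := diagonal d * A * diagonal d
  calc kappa A = ‖A‖ * ‖A⁻¹‖ := rfl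
    _ ≤ q * (‖diagonal d‖ ^ 2 * ‖B⁻¹‖) := by
        gcongr
        · exact hA.posSemidef.l2_opNorm_le_of_card_ne_zero_le hdiag hq
        · exact A.l2_opNorm_inv_le_diagonal_sq_mul fun i => (hd i).ne'
    _ ≤ q * (‖B‖ * ‖B⁻¹‖) := by
        gcongr
        exact l2_opNorm_diagonal_sq_le_of_diag_eq_one hdiag d
    _ = q * kappa B := rfl
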